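/- Every countable subgroup of ℤ^ω (the product of countably many copies of ℤ) is a free abelian group. -/

import Mathlib

/-!
Enumerate `G` as `g₀, g₁, …` and let `Pₙ` be the pure closure in `G` of `⟨g₀, …, gₙ₋₁⟩`. Over the
fraction field a finitely generated submodule of `R^ι` is finite dimensional, hence already
detected by finitely many coordinates; so `Pₙ` embeds into some `Rˢ` with `s` finite and is
finitely generated. Each `Pₙ₊₁ / Pₙ` is then finitely generated and torsion-free, hence free over
the PID `R`, and lifting bases of these quotients gives an increasing chain of independent sets
whose union is a basis of `G = ⋃ Pₙ`.
-/

open Submodule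

namespace Submodule

variable {R M : Type*} [CommRing R] [IsDomain R] [AddCommGroup M] [Module R M]

def pureClosure (G W : Submodule R M) : Submodule R M where
  carrier := {x | x ∈ G ∧ ∃ c : R, c ≠ 0 ∧ c • x ∈ W}
  zero_mem' := ⟨G.zero_mem, 1, one_ne_zero, by simp⟩
  add_mem' := by
    rintro x y ⟨hxG, c, hc, hcx⟩ ⟨hyG, d, hd, hdy⟩
    refine ⟨G.add_mem hxG hyG, c * d, mul_ne_zero hc hd, ?_⟩
    rw [smul_add, mul_comm, mul_smul, mul_comm, mul_smul]
    exact W.add_mem (W.smul_mem d hcx) (W.smul_mem c hdy)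
  smul_mem' := by
    rintro a x ⟨hxG, c, hc, hcx⟩
    exact ⟨G.smul_mem a hxG, c, hc, by rw [smul_comm]; exact W.smul_mem a hcx⟩

variable {G W W' : Submodule R M}

theorem pureClosure_le : pureClosure G W ≤ G := fun _ hx => hx.1

theorem pureClosure_mono (h : W ≤ W') : pureClosure G W ≤ pureClosure G W' :=
  fun _ ⟨hxG, c, hc, hcx⟩ => ⟨hxG, c, hc, h hcx⟩

theorem mem_pureClosure_of_mem {x : M} (hxG : x ∈ G) (hxW : x ∈ W) : x ∈ pureClosure G W :=
  ⟨hxG, 1, one_ne_zero, by rwa [one_smul]⟩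

theorem pureClosure_bot [Module.IsTorsionFree R M] : pureClosure G ⊥ = ⊥ :=
  eq_bot_iff.2 fun _ ⟨_, _, hc, hcx⟩ => (smul_eq_zero.1 hcx).resolve_left hc

theorem isTorsionFree_map_mkQ_pureClosure {B : Submodule R M} (hB : B ≤ G) :
    Module.IsTorsionFree R (B.map (pureClosure G W).mkQ) := by
  refine .of_smul_eq_zero fun c ⟨_, x, hxB, rfl⟩ h => or_iff_not_imp_left.2 fun hc => ?_
  have hcx : c • x ∈ pureClosure G W := by
    simpa [← Subtype.val_inj, ← Quotient.mk_smul, Quotient.mk_eq_zero] using h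
  obtain ⟨-, d, hd, hdcx⟩ := hcx
  exact Subtype.ext <|
    (Quotient.mk_eq_zero _).2 ⟨hB hxB, d * c, mul_ne_zero hd hc, by rwa [mul_smul]⟩

end Submodule

section Coordinates

variable {ι : Type*}

theorem Submodule.exists_finset_eq_zero_of_apply_eq_zero {K : Type*} [Field K]
    (V : Submodule K (ι → K)) [FiniteDimensional K V] :
    ∃ s : Finset ι, ∀ x ∈ V, (∀ i ∈ s, x i = 0) → x = 0 := by
  classical
  let F (s : Finset ι) : Submodule K (ι → K) := V ⊓ ⨅ i ∈ s, LinearMap.ker (LinearMap.proj i)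
  have mem_F {s : Finset ι} {x : ι → K} : x ∈ F s ↔ x ∈ V ∧ ∀ i ∈ s, x i = 0 := by
    simp [F]
  obtain ⟨s, hs⟩ : ∃ s, ∀ t, Module.finrank K (F s) ≤ Module.finrank K (F t) :=
    ⟨_, fun t => Function.argmin_le (fun t => Module.finrank K (F t)) t⟩
  refine ⟨s, fun x hxV hxs => funext fun i => ?_⟩
  -- `s` minimises `finrank (F s)`, so adjoining the coordinate `i` does not shrink `F s`.
  have hle : F (insert i s) ≤ F s := fun y hy => mem_F.2
    ⟨(mem_F.1 hy).1, fun j hj => (mem_F.1 hy).2 j (Finset.mem_insert_of_mem hj)⟩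
  have : FiniteDimensional K (F s) := finiteDimensional_of_le inf_le_left
  have hx : x ∈ F (insert i s) :=
    eq_of_le_of_finrank_le hle (hs _) ▸ mem_F.2 ⟨hxV, hxs⟩
  exact (mem_F.1 hx).2 i (Finset.mem_insert_self i s)

theorem Submodule.exists_finset_eq_zero_of_apply_eq_zero_of_mem_span {R : Type*} [CommRing R]
    [IsDomain R] {S : Set (ι → R)} (hS : S.Finite) :
    ∃ s : Finset ι, ∀ x ∈ span R S, (∀ i ∈ s, x i = 0) → x = 0 := by
  let K := FractionRing R
  let cast : (ι → R) →ₗ[R] ι → K := (Algebra.linearMap R K).compLeft ι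
  have : FiniteDimensional K (span K (cast '' S)) :=
    FiniteDimensional.span_of_finite K (hS.image cast)
  obtain ⟨s, hs⟩ := Submodule.exists_finset_eq_zero_of_apply_eq_zero (span K (cast '' S))
  refine ⟨s, fun x hx hxs => funext fun i => IsFractionRing.injective R K ?_⟩
  have hcast : cast x ∈ span K (cast '' S) :=
    span_le_restrictScalars R K _ (apply_mem_span_image_of_mem_span cast hx)
  simpa [cast] using congrFun (hs _ hcast fun i hi => by simp [cast, hxs i hi]) i

end Coordinates

section Chain

variable {R M : Type*} [Ring R] [AddCommGroup M] [Module R M]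

theorem LinearIndepOn.free_span {s : Set M} (hs : LinearIndepOn R id s) :
    Module.Free R (span R s) := by
  have := Module.Free.of_basis (Module.Basis.span hs)
  rwa [show Set.range (fun x : s => id (x : M)) = s from Subtype.range_coe] at this

theorem exists_linearIndepOn_extension_of_free_map_mkQ {A B : Submodule R M} (hAB : A ≤ B)
    {s : Set M} (hs : LinearIndepOn R id s) (hsA : span R s = A)
    [Module.Free R (B.map A.mkQ)] :
    ∃ t, s ⊆ t ∧ LinearIndepOn R id t ∧ span R t = B := by
  let b := Module.Free.chooseBasis R (B.map A.mkQ)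
  choose f hfB hf using fun i => mem_map.mp (b i).2
  have hbf : A.mkQ ∘ f = (B.map A.mkQ).subtype ∘ b := funext hf
  refine ⟨s ∪ Set.range f, Set.subset_union_left, ?_, ?_⟩
  · have hsA' : LinearIndependent R fun x : s => (⟨x, hsA ▸ subset_span x.2⟩ : A) :=
      .of_comp A.subtype hs
    have hf' : LinearIndependent R (A.mkQ ∘ f) := by
      rw [hbf]
      exact b.linearIndependent.map' _ (ker_subtype _)
    have := (hsA'.sumElim_of_quotient f hf').linearIndepOn_id
    rwa [Set.Sum.elim_range, Subtype.range_coe] at this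
  · rw [span_union, hsA]
    refine le_antisymm (sup_le hAB (span_le.2 (Set.range_subset_iff.2 hfB))) fun x hx => ?_
    have hx' : A.mkQ x ∈ span R (Set.range (A.mkQ ∘ f)) := by
      rw [hbf, Set.range_comp, ← map_span, b.span_eq, map_subtype_top]
      exact mem_map_of_mem hx
    rwa [Set.range_comp, ← map_span, ← mem_comap, comap_map_mkQ] at hx'

theorem Module.free_iSup_of_free_map_mkQ {P : ℕ → Submodule R M} (hP : Monotone P)
    (h0 : P 0 = ⊥) (hfree : ∀ n, Module.Free R ((P (n + 1)).map (P n).mkQ)) :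
    Module.Free R ↥(⨆ n, P n) := by
  have step (n : ℕ) (s : Set M) (hs : LinearIndepOn R id s) (hsP : span R s = P n) :
      ∃ t, s ⊆ t ∧ LinearIndepOn R id t ∧ span R t = P (n + 1) :=
    exists_linearIndepOn_extension_of_free_map_mkQ (hP n.le_succ) hs hsP
  let S (n : ℕ) : {s : Set M // LinearIndepOn R id s ∧ span R s = P n} :=
    Nat.rec ⟨∅, linearIndepOn_empty R id, by rw [span_empty, h0]⟩
      (fun n s => ⟨_, (step n s.1 s.2.1 s.2.2).choose_spec.2⟩) n
  have hS : Monotone fun n => (S n).1 :=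
    monotone_nat_of_le_succ fun n => (step n (S n).1 (S n).2.1 (S n).2.2).choose_spec.1
  have hspan : span R (⋃ n, (S n).1) = ⨆ n, P n := by
    simp only [span_iUnion, (S _).2.2]
  rw [← hspan]
  exact (linearIndepOn_iUnion_of_directed hS.directed_le fun n => (S n).2.1).free_span

end Chain

theorem Submodule.finite_pureClosure_span {R ι : Type*} [CommRing R] [IsDomain R]
    [IsNoetherianRing R] (G : Submodule R (ι → R)) {S : Set (ι → R)} (hS : S.Finite) :
    Module.Finite R (pureClosure G (span R S)) := by
  obtain ⟨s, hs⟩ := exists_finset_eq_zero_of_apply_eq_zero_of_mem_span hS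
  let restrict := (LinearMap.funLeft R R ((↑) : s → ι)).comp (pureClosure G (span R S)).subtype
  refine Module.Finite.of_injective restrict ((injective_iff_map_eq_zero _).2 ?_)
  rintro ⟨x, _, c, hc, hcx⟩ hx
  have hcx0 : c • x = 0 := hs _ hcx fun i hi => by
    rw [Pi.smul_apply, show x i = 0 from congrFun hx ⟨i, hi⟩, smul_zero]
  exact Subtype.ext ((smul_eq_zero.1 hcx0).resolve_left hc)

theorem Submodule.free_of_countable {R ι : Type*} [CommRing R] [IsDomain R]
    [IsPrincipalIdealRing R] (G : Submodule R (ι → R)) [Countable G] : Module.Free R G := by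
  obtain ⟨e, he⟩ := exists_surjective_nat G
  let g (k : ℕ) : ι → R := e k
  let P (n : ℕ) := pureClosure G (span R (g '' Set.Iio n))
  have hP : Monotone P := fun m n hmn =>
    pureClosure_mono (span_mono (Set.image_mono (Set.Iio_subset_Iio hmn)))
  have hP0 : P 0 = ⊥ := by simp [P, pureClosure_bot]
  have hfree (n : ℕ) : Module.Free R ((P (n + 1)).map (P n).mkQ) := by
    have : Module.Finite R (P (n + 1)) := finite_pureClosure_span G ((Set.finite_Iio _).image g)
    have : Module.IsTorsionFree R ((P (n + 1)).map (P n).mkQ) :=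
      isTorsionFree_map_mkQ_pureClosure pureClosure_le
    exact Module.free_of_finite_type_torsion_free'
  have hsup : ⨆ n, P n = G := le_antisymm (iSup_le fun n => pureClosure_le) fun x hx => by
    obtain ⟨k, hk⟩ := he ⟨x, hx⟩
    refine mem_iSup_of_mem (k + 1) (mem_pureClosure_of_mem hx (subset_span ⟨k, k.lt_succ_self, ?_⟩))
    simp [g, hk]
  exact hsup ▸ Module.free_iSup_of_free_map_mkQ hP hP0 hfree

/-- Every countable subgroup of `ℤ^ω` (the product of countably many copies of `ℤ`)
is a free abelian group. -/
theorem stmt19 (G : AddSubgroup (ℕ → ℤ)) [Countable ↥G] :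
    Module.Free ℤ ↥G := by
  have : Countable (AddSubgroup.toIntSubmodule G) := ‹Countable G›
  exact (AddSubgroup.toIntSubmodule G).free_of_countable
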